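/- arXiv:physics/9712041 — 2 statements merged into one kernel-verified Lean document; each statement's English description precedes it below -/
import Mathlib

section
/- Let x_0,…,x_n ∈ ℝ, δ > 0, and n ≥ 1. Define for each path i (fixed-point-free function on {0,…,n}) the quantity s(i)² = ∑_{j=0}^n (x_j - x_{i_j})², and assume s(i) > 0 for all paths i. Then with K the standard Gaussian kernel and Φ(h) = ∑_{paths i} ∏_j K_h(x_j - x_{i_j}), one has ∫_0^∞ h · Φ(h) h^{-δ} dh / ∫_0^∞ Φ(h) h^{-δ} dh = C_{n,δ} · (∑_i α(i) s(i)) / (∑_i α(i)), where α(i) = s(i)^{-(n+δ)} and C_{n,δ} = (1/√2)·Γ((n+δ-1)/2)/Γ((n+δ)/2). -/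
/-!
Each path contributes `(2π)^{-(n+1)/2} h^{-(n+1)} exp(-s(i)²/(2h²))` to `Φ(h)`, so both
integrals are finite sums of integrals `∫₀^∞ h^{-a} exp(-c/h²) dh`; the substitution `y = 1/h`
turns these into `½ Γ((a-1)/2) c^{-(a-1)/2}`. With `c = s(i)²/2`, the numerator (`a = n + δ`)
and the denominator (`a = n + δ + 1`) become `∑ α(i) s(i)` and `∑ α(i)` times constants whose
ratio is `2^{-1/2} Γ((n+δ-1)/2) / Γ((n+δ)/2)`.
-/

open MeasureTheory Real

/-- The scaled Gaussian kernel `K_h(x) = (1/(h√(2π))) exp(-x²/(2h²))`. -/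
noncomputable def gk (h x : ℝ) : ℝ :=
  (1 / (h * Real.sqrt (2 * Real.pi))) * Real.exp (-x ^ 2 / (2 * h ^ 2))

/-- The set of *paths*: fixed-point-free index functions on `{0,…,n}`. -/
def paths (n : ℕ) : Finset (Fin (n + 1) → Fin (n + 1)) :=
  Finset.univ.filter fun i => ∀ j, i j ≠ j

/-- The path statistic `s(i) = √(∑ⱼ (xⱼ - x_{iⱼ})²)`. -/
noncomputable def spath (n : ℕ) (x : Fin (n + 1) → ℝ) (i : Fin (n + 1) → Fin (n + 1)) : ℝ :=
  Real.sqrt (∑ j, (x j - x (i j)) ^ 2)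

open Finset

lemma rpow_neg_mul_exp_neg_div_sq_eq_comp_inv {a c x : ℝ} (hx : 0 < x) :
    (|(-1 : ℝ)| * x ^ ((-1 : ℝ) - 1)) •
        ((x ^ (-1 : ℝ)) ^ (a - 2) * exp (-c * (x ^ (-1 : ℝ)) ^ (2 : ℝ)))
      = x ^ (-a) * exp (-c / x ^ 2) := by
  have hx2 : x ^ (-2 : ℝ) = (x ^ 2)⁻¹ := by rw [rpow_neg hx.le, rpow_two]
  rw [rpow_neg_one, smul_eq_mul, abs_neg, abs_one, one_mul, inv_rpow hx.le, inv_rpow hx.le,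
    ← rpow_neg hx.le, ← rpow_neg hx.le, ← mul_assoc, ← rpow_add hx,
    show (-1 : ℝ) - 1 + -(a - 2) = -a by ring, hx2, div_eq_mul_inv]

lemma integrableOn_rpow_neg_mul_exp_neg_div_sq {a c : ℝ} (ha : 1 < a) (hc : 0 < c) :
    IntegrableOn (fun h : ℝ => h ^ (-a) * exp (-c / h ^ 2)) (Set.Ioi 0) := by
  have h := (integrableOn_Ioi_comp_rpow_iff
      (fun y : ℝ => y ^ (a - 2) * exp (-c * y ^ (2 : ℝ))) (p := -1) (by norm_num)).mpr
    (integrableOn_rpow_mul_exp_neg_mul_rpow (by linarith) two_pos hc)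
  exact h.congr_fun (fun _ hx => rpow_neg_mul_exp_neg_div_sq_eq_comp_inv hx) measurableSet_Ioi

lemma integral_rpow_neg_mul_exp_neg_div_sq {a c : ℝ} (ha : 1 < a) (hc : 0 < c) :
    ∫ h in Set.Ioi (0 : ℝ), h ^ (-a) * exp (-c / h ^ 2)
      = 1 / 2 * Gamma ((a - 1) / 2) * c ^ (-(a - 1) / 2) := by
  have hsubst := integral_comp_rpow_Ioi
    (fun y : ℝ => y ^ (a - 2) * exp (-c * y ^ (2 : ℝ))) (p := -1) (by norm_num)
  rw [setIntegral_congr_fun measurableSet_Ioi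
    (fun _ hx => rpow_neg_mul_exp_neg_div_sq_eq_comp_inv hx)] at hsubst
  rw [hsubst, integral_rpow_mul_exp_neg_mul_rpow two_pos (by linarith) hc,
    show (a - 2 + 1) / 2 = (a - 1) / 2 by ring, show -(a - 2 + 1) / 2 = -(a - 1) / 2 by ring]
  ring

lemma integral_sum_rpow_neg_mul_exp_neg_div_sq {ι : Type*} {s : Finset ι} {a : ℝ}
    {c : ι → ℝ} (ha : 1 < a) (hc : ∀ i ∈ s, 0 < c i) :
    ∫ h in Set.Ioi (0 : ℝ), ∑ i ∈ s, h ^ (-a) * exp (-c i / h ^ 2)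
      = 1 / 2 * Gamma ((a - 1) / 2) * ∑ i ∈ s, c i ^ (-(a - 1) / 2) := by
  rw [integral_finsetSum _ fun i hi => integrableOn_rpow_neg_mul_exp_neg_div_sq ha (hc i hi),
    mul_sum]
  exact sum_congr rfl fun i hi => integral_rpow_neg_mul_exp_neg_div_sq ha (hc i hi)

lemma prod_gk {ι : Type*} [Fintype ι] (h : ℝ) (y : ι → ℝ) :
    ∏ j, gk h (y j)
      = (h * sqrt (2 * π))⁻¹ ^ Fintype.card ι * exp (-(∑ j, y j ^ 2) / (2 * h ^ 2)) := by
  simp only [gk, one_div, prod_mul_distrib, prod_const, card_univ, ← exp_sum, ← sum_div,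
    sum_neg_distrib]

-- the paper's `Φ(h)`
noncomputable def pathLikelihood (n : ℕ) (x : Fin (n + 1) → ℝ) (h : ℝ) : ℝ :=
  ∑ i ∈ paths n, ∏ j, gk h (x j - x (i j))

lemma pathLikelihood_mul_rpow_neg {n : ℕ} (x : Fin (n + 1) → ℝ) (b : ℝ) {h : ℝ} (hh : 0 < h) :
    pathLikelihood n x h * h ^ (-b)
      = (sqrt (2 * π))⁻¹ ^ (n + 1) *
          ∑ i ∈ paths n, h ^ (-((n : ℝ) + 1 + b)) * exp (-(spath n x i ^ 2 / 2) / h ^ 2) := by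
  have hpow : h⁻¹ ^ (n + 1) * h ^ (-b) = h ^ (-((n : ℝ) + 1 + b)) := by
    rw [neg_add, rpow_add hh, inv_pow, ← rpow_natCast, ← rpow_neg hh.le, Nat.cast_succ]
  rw [pathLikelihood, sum_mul, mul_sum]
  refine sum_congr rfl fun i _ => ?_
  rw [prod_gk, Fintype.card_fin, spath, sq_sqrt (sum_nonneg fun _ _ => sq_nonneg _), mul_inv,
    mul_pow, ← hpow]
  ring_nf

lemma integral_pathLikelihood_mul_rpow_neg {n : ℕ} {x : Fin (n + 1) → ℝ} {b : ℝ}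
    (hb : 0 < n + b) (hs : ∀ i ∈ paths n, 0 < spath n x i) :
    ∫ h in Set.Ioi (0 : ℝ), pathLikelihood n x h * h ^ (-b)
      = (sqrt (2 * π))⁻¹ ^ (n + 1) * (1 / 2 * Gamma ((n + b) / 2) * 2 ^ ((n + b) / 2)) *
          ∑ i ∈ paths n, spath n x i ^ (-((n : ℝ) + b)) := by
  rw [setIntegral_congr_fun measurableSet_Ioi fun h hh => pathLikelihood_mul_rpow_neg x b hh,
    integral_const_mul, integral_sum_rpow_neg_mul_exp_neg_div_sq (by linarith)
      fun i hi => by have := hs i hi; positivity,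
    show (n : ℝ) + 1 + b - 1 = n + b by ring, mul_sum, mul_sum, mul_sum]
  refine sum_congr rfl fun i hi => ?_
  have hsi := hs i hi
  rw [div_rpow (sq_nonneg _) zero_le_two, ← rpow_two, ← rpow_mul hsi.le,
    show 2 * (-((n : ℝ) + b) / 2) = -(n + b) by ring,
    show -((n : ℝ) + b) / 2 = -((n + b) / 2) by ring,
    rpow_neg zero_le_two, div_inv_eq_mul]
  ring

/-- The posterior mean of the bandwidth `h` under the prior factor `π(h) = h^{-δ}` and the
cross-validated Gaussian path likelihood `Φ(h) = ∑_{paths} ∏ⱼ K_h(xⱼ - x_{iⱼ})` equals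
`C_{n,δ} · (∑ᵢ α(i) s(i)) / (∑ᵢ α(i))` with `α(i) = s(i)^{-(n+δ)}` and
`C_{n,δ} = (1/√2)·Γ((n+δ-1)/2)/Γ((n+δ)/2)`. -/
theorem posterior_mean_bandwidth (n : ℕ) (hn : 1 ≤ n) (δ : ℝ) (hδ : 0 < δ)
    (x : Fin (n + 1) → ℝ) (hs : ∀ i ∈ paths n, 0 < spath n x i) :
    (∫ h in Set.Ioi (0 : ℝ),
        h * ((∑ i ∈ paths n, ∏ j, gk h (x j - x (i j))) * h ^ (-δ))) /
      (∫ h in Set.Ioi (0 : ℝ),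
        (∑ i ∈ paths n, ∏ j, gk h (x j - x (i j))) * h ^ (-δ))
      = ((1 / Real.sqrt 2) * (Real.Gamma (((n : ℝ) + δ - 1) / 2) / Real.Gamma (((n : ℝ) + δ) / 2)))
        * ((∑ i ∈ paths n, spath n x i ^ (-((n : ℝ) + δ)) * spath n x i) /
            (∑ i ∈ paths n, spath n x i ^ (-((n : ℝ) + δ)))) := by
  have hnδ : 1 < (n : ℝ) + δ := by
    have : (1 : ℝ) ≤ n := by exact_mod_cast hn
    linarith
  have hnum : ∫ h in Set.Ioi (0 : ℝ), h * (pathLikelihood n x h * h ^ (-δ))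
      = ∫ h in Set.Ioi (0 : ℝ), pathLikelihood n x h * h ^ (-(δ - 1)) :=
    setIntegral_congr_fun measurableSet_Ioi fun h hh => by
      rw [show -(δ - 1) = 1 + -δ by ring, rpow_add hh, rpow_one]
      ring
  have hsum : ∑ i ∈ paths n, spath n x i ^ (-((n : ℝ) + (δ - 1)))
      = ∑ i ∈ paths n, spath n x i ^ (-((n : ℝ) + δ)) * spath n x i :=
    sum_congr rfl fun i hi => by
      rw [show -((n : ℝ) + (δ - 1)) = -(n + δ) + 1 by ring, rpow_add (hs i hi), rpow_one]
  have hsqrt2 :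
      (2 : ℝ) ^ (((n : ℝ) + (δ - 1)) / 2) = 2 ^ (((n : ℝ) + δ) / 2) * (1 / sqrt 2) := by
    rw [sqrt_eq_rpow, one_div, ← rpow_neg zero_le_two, ← rpow_add two_pos]
    ring_nf
  change (∫ h in Set.Ioi (0 : ℝ), h * (pathLikelihood n x h * h ^ (-δ))) /
    (∫ h in Set.Ioi (0 : ℝ), pathLikelihood n x h * h ^ (-δ)) = _
  rw [hnum, integral_pathLikelihood_mul_rpow_neg (by linarith) hs,
    integral_pathLikelihood_mul_rpow_neg (by linarith) hs, hsum, hsqrt2]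
  set K := (sqrt (2 * π))⁻¹ ^ (n + 1) * (1 / 2) * (2 : ℝ) ^ (((n : ℝ) + δ) / 2)
  have hK : K ≠ 0 := by positivity
  calc _ = K * (1 / sqrt 2 * Gamma (((n : ℝ) + δ - 1) / 2) *
          ∑ i ∈ paths n, spath n x i ^ (-((n : ℝ) + δ)) * spath n x i) /
        (K * (Gamma (((n : ℝ) + δ) / 2) * ∑ i ∈ paths n, spath n x i ^ (-((n : ℝ) + δ)))) := by
        rw [← add_sub_assoc]
        ring
    _ = _ := by rw [mul_div_mul_left _ _ hK, mul_div_mul_comm, mul_div_assoc]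
end

section
/- Let i be a path on {0,…,n} whose functional graph is a single cycle of length n+1 containing x_0, i.e., i is a cyclic permutation of {0,…,n}. Then, fixing x_0, ∫_{ℝ^n} ∏_{j=0}^n K_h(x_j - x_{i_j}) dx_1⋯dx_n = 1/(√(2π·(n+1)) · h). -/
open MeasureTheory Real
open scoped ENNReal

/-- The point `x₀` followed by the free variables `y`, as a function on `Fin (n+1)`. -/
def pts (n : ℕ) (x0 : ℝ) (y : Fin n → ℝ) : Fin (n + 1) → ℝ :=
  Fin.cons x0 y

lemma gk_nonneg {h : ℝ} (hh : 0 < h) (x : ℝ) : 0 ≤ gk h x := by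
  unfold gk
  positivity

lemma gk_conv {a b : ℝ} (ha : 0 < a) (hb : 0 < b) (x y : ℝ) :
    ∫ z : ℝ, gk a (x - z) * gk b (z - y) = gk (Real.sqrt (a ^ 2 + b ^ 2)) (x - y) := by
  set s : ℝ := a ^ 2 + b ^ 2 with hs_def
  have hs : 0 < s := by positivity
  set c : ℝ := s / (2 * a ^ 2 * b ^ 2) with hc_def
  have hc : 0 < c := by positivity
  set m : ℝ := (b ^ 2 * x + a ^ 2 * y) / s with hm_def
  have hsc : Real.sqrt c = Real.sqrt s / (Real.sqrt 2 * a * b) := by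
    rw [show c = (Real.sqrt s / (Real.sqrt 2 * a * b)) ^ 2 by
      rw [div_pow, mul_pow, mul_pow, Real.sq_sqrt hs.le, Real.sq_sqrt (by norm_num : (2:ℝ) ≥ 0)]]
    exact Real.sqrt_sq (by positivity)
  have key : ∀ z : ℝ, gk a (x - z) * gk b (z - y)
      = gk (Real.sqrt s) (x - y) * (Real.sqrt (c / π) * Real.exp (-c * (z - m) ^ 2)) := by
    intro z
    unfold gk
    rw [Real.sq_sqrt hs.le]
    have hexp : Real.exp (-(x - z) ^ 2 / (2 * a ^ 2)) * Real.exp (-(z - y) ^ 2 / (2 * b ^ 2))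
        = Real.exp (-(x - y) ^ 2 / (2 * s)) * Real.exp (-c * (z - m) ^ 2) := by
      rw [← Real.exp_add, ← Real.exp_add]
      congr 1
      rw [hc_def, hm_def, hs_def]
      field_simp
      ring
    have hconst : 1 / (a * Real.sqrt (2 * π)) * (1 / (b * Real.sqrt (2 * π)))
        = 1 / (Real.sqrt s * Real.sqrt (2 * π)) * Real.sqrt (c / π) := by
      rw [Real.sqrt_div hc.le, hsc, Real.sqrt_mul (by norm_num : (0:ℝ) ≤ 2) π]
      have h2 : Real.sqrt 2 * Real.sqrt 2 = 2 := Real.mul_self_sqrt (by norm_num)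
      have hpi : Real.sqrt π * Real.sqrt π = π := Real.mul_self_sqrt Real.pi_pos.le
      have hs2 : Real.sqrt s ≠ 0 := by positivity
      have h2' : Real.sqrt 2 ≠ 0 := by positivity
      have hpi' : Real.sqrt π ≠ 0 := by positivity
      field_simp
    calc 1 / (a * Real.sqrt (2 * π)) * Real.exp (-(x - z) ^ 2 / (2 * a ^ 2)) *
          (1 / (b * Real.sqrt (2 * π)) * Real.exp (-(z - y) ^ 2 / (2 * b ^ 2)))
        = (1 / (a * Real.sqrt (2 * π)) * (1 / (b * Real.sqrt (2 * π)))) *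
          (Real.exp (-(x - z) ^ 2 / (2 * a ^ 2)) * Real.exp (-(z - y) ^ 2 / (2 * b ^ 2))) := by ring
      _ = _ := by rw [hexp, hconst]; ring
  calc ∫ z : ℝ, gk a (x - z) * gk b (z - y)
      = ∫ z : ℝ, gk (Real.sqrt s) (x - y) * (Real.sqrt (c / π) * Real.exp (-c * (z - m) ^ 2)) := by
        simp_rw [key]
    _ = gk (Real.sqrt s) (x - y) * (Real.sqrt (c / π) * ∫ z : ℝ, Real.exp (-c * (z - m) ^ 2)) := by
        rw [integral_const_mul, integral_const_mul]
    _ = gk (Real.sqrt s) (x - y) := by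
        rw [show (∫ z : ℝ, Real.exp (-c * (z - m) ^ 2)) = ∫ z : ℝ, Real.exp (-c * z ^ 2) from
          integral_sub_right_eq_self (fun z => Real.exp (-c * z ^ 2)) m,
          integral_gaussian, ← Real.sqrt_mul (by positivity : (0:ℝ) ≤ c / π),
          show c / π * (π / c) = 1 by field_simp, Real.sqrt_one, mul_one]

lemma gk_le {a : ℝ} (ha : 0 < a) (u : ℝ) : gk a u ≤ 1 / (a * Real.sqrt (2 * Real.pi)) := by
  unfold gk
  have h1 : Real.exp (-u ^ 2 / (2 * a ^ 2)) ≤ 1 := by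
    rw [Real.exp_le_one_iff, neg_div]
    have : (0:ℝ) ≤ u ^ 2 / (2 * a ^ 2) := by positivity
    linarith
  have h2 : (0:ℝ) ≤ 1 / (a * Real.sqrt (2 * Real.pi)) := by positivity
  nlinarith

lemma gk_continuous (a : ℝ) : Continuous (gk a) := by
  unfold gk
  have h1 : Continuous fun x : ℝ => -x ^ 2 / (2 * a ^ 2) :=
    ((continuous_pow 2).neg).div_const _
  have h2 : Continuous fun x : ℝ => Real.exp (-x ^ 2 / (2 * a ^ 2)) :=
    Real.continuous_exp.comp h1
  exact continuous_const.mul h2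

lemma gk_integrable {b : ℝ} (hb : 0 < b) (y : ℝ) : Integrable (fun z => gk b (z - y)) := by
  have h1 : Integrable (fun z : ℝ => Real.exp (-(1 / (2 * b ^ 2)) * z ^ 2)) :=
    integrable_exp_neg_mul_sq (by positivity)
  have h2 : Integrable (fun z : ℝ => Real.exp (-(1 / (2 * b ^ 2)) * (z - y) ^ 2)) :=
    h1.comp_sub_right y
  have h3 : Integrable (fun z : ℝ =>
      (1 / (b * Real.sqrt (2 * Real.pi))) * Real.exp (-(1 / (2 * b ^ 2)) * (z - y) ^ 2)) :=
    h2.const_mul _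
  have heq : (fun z : ℝ =>
      (1 / (b * Real.sqrt (2 * Real.pi))) * Real.exp (-(1 / (2 * b ^ 2)) * (z - y) ^ 2))
      = fun z => gk b (z - y) := by
    funext z
    unfold gk
    congr 1
    ring
  rw [← heq]
  exact h3

lemma gk_mul_integrable {a b : ℝ} (ha : 0 < a) (hb : 0 < b) (x y : ℝ) :
    Integrable (fun z => gk a (x - z) * gk b (z - y)) := by
  refine (gk_integrable hb y).bdd_mul (c := 1 / (a * Real.sqrt (2 * Real.pi))) ?_
    (Filter.Eventually.of_forall fun z => ?_)
  · exact ((gk_continuous a).comp (continuous_const.sub continuous_id)).aestronglyMeasurable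
  · rw [Real.norm_eq_abs, abs_of_nonneg (gk_nonneg ha _)]
    exact gk_le ha _

lemma gk_conv_lintegral {a b : ℝ} (ha : 0 < a) (hb : 0 < b) (x y : ℝ) :
    ∫⁻ z : ℝ, ENNReal.ofReal (gk a (x - z) * gk b (z - y))
      = ENNReal.ofReal (gk (Real.sqrt (a ^ 2 + b ^ 2)) (x - y)) := by
  rw [← ofReal_integral_eq_lintegral_ofReal (gk_mul_integrable ha hb x y)
    (Filter.Eventually.of_forall fun z => mul_nonneg (gk_nonneg ha _) (gk_nonneg hb _)),
    gk_conv ha hb]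

lemma snoc_cons_succ {n : ℕ} (z y : ℝ) (w : Fin n → ℝ) (i : Fin (n + 1)) :
    (Fin.snoc (Fin.cons z w : Fin (n + 1) → ℝ) y : Fin (n + 2) → ℝ) i.succ
      = (Fin.snoc w y : Fin (n + 1) → ℝ) i := by
  induction i using Fin.lastCases with
  | last => rw [Fin.succ_last, Fin.snoc_last, Fin.snoc_last]
  | cast i => rw [Fin.succ_castSucc, Fin.snoc_castSucc, Fin.snoc_castSucc, Fin.cons_succ]

lemma snoc_cons_zero {n : ℕ} (z y : ℝ) (w : Fin n → ℝ) :
    (Fin.snoc (Fin.cons z w : Fin (n + 1) → ℝ) y : Fin (n + 2) → ℝ) (0 : Fin (n + 2)) = z := by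
  rw [← Fin.castSucc_zero, Fin.snoc_castSucc, Fin.cons_zero]

lemma meas_cons_apply {m : ℕ} (x : ℝ) (j : Fin (m + 1)) :
    Measurable fun v : Fin m → ℝ => (Fin.cons x v : Fin (m + 1) → ℝ) j := by
  induction j using Fin.cases with
  | zero => simp only [Fin.cons_zero]; exact measurable_const
  | succ i => simp only [Fin.cons_succ]; exact measurable_pi_apply i

lemma meas_snoc_apply {m : ℕ} (y : ℝ) (j : Fin (m + 1)) :
    Measurable fun v : Fin m → ℝ => (Fin.snoc v y : Fin (m + 1) → ℝ) j := by
  induction j using Fin.lastCases with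
  | last => simp only [Fin.snoc_last]; exact measurable_const
  | cast i => simp only [Fin.snoc_castSucc]; exact measurable_pi_apply i

lemma chain_meas (h x y : ℝ) (m : ℕ) :
    Measurable fun v : Fin m → ℝ =>
      ENNReal.ofReal (∏ j : Fin (m + 1),
        gk h ((Fin.cons x v : Fin (m + 1) → ℝ) j - (Fin.snoc v y : Fin (m + 1) → ℝ) j)) := by
  apply Measurable.ennreal_ofReal
  apply Finset.measurable_prod
  intro j _
  exact (gk_continuous h).measurable.comp ((meas_cons_apply x j).sub (meas_snoc_apply y j))

lemma chainL (h : ℝ) (hh : 0 < h) :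
    ∀ (n : ℕ) (x y : ℝ),
    ∫⁻ v : Fin n → ℝ, ENNReal.ofReal (∏ j : Fin (n + 1),
      gk h ((Fin.cons x v : Fin (n + 1) → ℝ) j - (Fin.snoc v y : Fin (n + 1) → ℝ) j))
      = ENNReal.ofReal (gk (h * Real.sqrt ((n : ℝ) + 1)) (x - y)) := by
  intro n
  induction n with
  | zero =>
    intro x y
    have h1 : ∀ v : Fin 0 → ℝ,
        (∏ j : Fin 1, gk h ((Fin.cons x v : Fin 1 → ℝ) j - (Fin.snoc v y : Fin 1 → ℝ) j))
          = gk h (x - y) := by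
      intro v
      rw [Fin.prod_univ_one, Fin.cons_zero, show (0 : Fin 1) = Fin.last 0 from rfl,
        Fin.snoc_last]
    simp_rw [h1]
    rw [lintegral_const]
    have h2 : (volume : Measure (Fin 0 → ℝ)) Set.univ = 1 := by
      rw [show (volume : Measure (Fin 0 → ℝ)) = Measure.pi (fun _ => volume) from rfl,
        Measure.pi_univ]
      simp
    rw [h2, mul_one]
    norm_num
  | succ n ih =>
    intro x y
    set B : ℝ := h * Real.sqrt ((n : ℝ) + 1) with hB_def
    have hB : 0 < B := by positivity
    set F : (Fin (n + 1) → ℝ) → ℝ≥0∞ := fun v =>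
      ENNReal.ofReal (∏ j : Fin (n + 2),
        gk h ((Fin.cons x v : Fin (n + 2) → ℝ) j - (Fin.snoc v y : Fin (n + 2) → ℝ) j)) with hF_def
    have hF : Measurable F := chain_meas h x y (n + 1)
    set e := MeasurableEquiv.piFinSuccAbove (fun _ : Fin (n + 1) => ℝ) 0 with he_def
    have mp := (volume_preserving_piFinSuccAbove (fun _ : Fin (n + 1) => ℝ) 0).symm
    have he : ∀ (z : ℝ) (w : Fin n → ℝ), e.symm (z, w) = Fin.cons z w := by
      intro z w
      show (Fin.insertNthEquiv (fun _ : Fin (n + 1) => ℝ) 0) (z, w) = Fin.cons z w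
      simp [Fin.insertNthEquiv, Fin.insertNth_zero']
    have hsplit : ∀ (z : ℝ) (w : Fin n → ℝ), F (Fin.cons z w)
        = ENNReal.ofReal (gk h (x - z)) *
          ENNReal.ofReal (∏ j : Fin (n + 1),
            gk h ((Fin.cons z w : Fin (n + 1) → ℝ) j - (Fin.snoc w y : Fin (n + 1) → ℝ) j)) := by
      intro z w
      rw [hF_def]
      beta_reduce
      have : (∏ j : Fin (n + 2), gk h ((Fin.cons x (Fin.cons z w) : Fin (n + 2) → ℝ) j
            - (Fin.snoc (Fin.cons z w : Fin (n + 1) → ℝ) y : Fin (n + 2) → ℝ) j))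
          = gk h (x - z) * ∏ j : Fin (n + 1),
            gk h ((Fin.cons z w : Fin (n + 1) → ℝ) j - (Fin.snoc w y : Fin (n + 1) → ℝ) j) := by
        rw [Fin.prod_univ_succ]
        congr 1
        · exact Finset.prod_congr rfl fun i _ => by rw [Fin.cons_succ, snoc_cons_succ]
      rw [this, ENNReal.ofReal_mul (gk_nonneg hh _)]
    calc ∫⁻ v : Fin (n + 1) → ℝ, F v
        = ∫⁻ p : ℝ × (Fin n → ℝ), F (e.symm p) := (mp.lintegral_comp hF).symm
      _ = ∫⁻ z : ℝ, ∫⁻ w : Fin n → ℝ, F (e.symm (z, w)) :=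
          lintegral_prod _ (hF.comp e.symm.measurable).aemeasurable
      _ = ∫⁻ z : ℝ, ENNReal.ofReal (gk h (x - z) * gk B (z - y)) := by
          refine lintegral_congr fun z => ?_
          simp only [he, hsplit]
          rw [lintegral_const_mul' _ _ ENNReal.ofReal_ne_top, ih z y, ← ENNReal.ofReal_mul
            (gk_nonneg hh _)]
      _ = ENNReal.ofReal (gk (Real.sqrt (h ^ 2 + B ^ 2)) (x - y)) := gk_conv_lintegral hh hB x y
      _ = ENNReal.ofReal (gk (h * Real.sqrt (((n : ℕ) + 1 : ℕ) + 1)) (x - y)) := by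
          congr 2
          rw [hB_def, mul_pow, Real.sq_sqrt (by positivity : (0:ℝ) ≤ (n : ℝ) + 1),
            show h ^ 2 + h ^ 2 * ((n : ℝ) + 1) = h ^ 2 * ((n : ℝ) + 1 + 1) by ring,
            Real.sqrt_mul (sq_nonneg h), Real.sqrt_sq hh.le]
          push_cast
          ring_nf

lemma cons_add_one_eq_snoc {n : ℕ} (x0 : ℝ) (y : Fin n → ℝ) (k : Fin (n + 1)) :
    (Fin.cons x0 y : Fin (n + 1) → ℝ) (k + 1) = (Fin.snoc y x0 : Fin (n + 1) → ℝ) k := by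
  induction k using Fin.lastCases with
  | last =>
    have h0 : (Fin.last n + 1 : Fin (n + 1)) = 0 := by
      ext
      rw [Fin.val_add, Fin.val_one', Fin.val_last]
      simp
    rw [Fin.snoc_last, h0, Fin.cons_zero]
  | cast i => rw [Fin.snoc_castSucc, Fin.coeSucc_eq_succ, Fin.cons_succ]

/-- For a path which is a single cycle of length `n+1` (a cyclic permutation `σ` of
`{0,…,n}`) containing `x₀`, integrating the product of Gaussian kernels over
`x₁,…,xₙ ∈ ℝ` gives `K_{h√(n+1)}(0) = 1/(√(2π(n+1))·h)`, independent of `x₀`. -/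
theorem single_cycle_integral (n : ℕ) (hn : 1 ≤ n) (h : ℝ) (hh : 0 < h)
    (σ : Equiv.Perm (Fin (n + 1))) (hσ : σ.IsCycle) (hσc : σ.support.card = n + 1)
    (x0 : ℝ) :
    (∫ y : Fin n → ℝ, ∏ j, gk h (pts n x0 y j - pts n x0 y (σ j)))
      = 1 / (Real.sqrt (2 * Real.pi * ((n : ℝ) + 1)) * h) := by
  -- the conjugating map τ : j ↦ σ^j 0
  have hsupp : σ.support = Finset.univ :=
    Finset.eq_univ_of_card _ (by simpa using hσc)
  have horder : orderOf σ = n + 1 := by rw [hσ.orderOf, hσc]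
  have hmem : ∀ z : Fin (n + 1), σ z ≠ z := by
    intro z
    rw [← Equiv.Perm.mem_support, hsupp]
    exact Finset.mem_univ z
  have surj : Function.Surjective (fun j : Fin (n + 1) => (σ ^ (j : ℕ)) 0) := by
    intro u
    obtain ⟨i, hi⟩ := hσ.exists_pow_eq (hmem 0) (hmem u)
    refine ⟨⟨i % (n + 1), Nat.mod_lt _ (by omega)⟩, ?_⟩
    show (σ ^ (i % (n + 1))) 0 = u
    have hp := pow_mod_orderOf σ i
    rw [horder] at hp
    rw [hp, hi]
  have bij := Finite.surjective_iff_bijective.mp surj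
  set τ : Fin (n + 1) ≃ Fin (n + 1) := Equiv.ofBijective _ bij with hτ_def
  have hτ : ∀ j, τ j = (σ ^ (j : ℕ)) 0 := fun j => rfl
  have hτ0 : τ 0 = 0 := by rw [hτ]; simp
  have hστ : ∀ j, σ (τ j) = τ (j + 1) := by
    intro j
    rw [hτ, hτ]
    have hv : ((j + 1 : Fin (n + 1)) : ℕ) = ((j : ℕ) + 1) % (n + 1) := by
      rw [Fin.val_add, Fin.val_one', Nat.mod_eq_of_lt (show 1 < n + 1 by omega)]
    have hp := pow_mod_orderOf σ ((j : ℕ) + 1)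
    rw [horder] at hp
    rw [hv, hp, pow_succ', Equiv.Perm.mul_apply]
  -- τ.symm fixes 0; induced permutation ρ on Fin n
  have hτs0 : τ.symm 0 = 0 := (Equiv.symm_apply_eq τ).mpr hτ0.symm
  have hτsne : ∀ i : Fin n, τ.symm i.succ ≠ 0 := by
    intro i hc
    have h2 := congrArg τ hc
    rw [Equiv.apply_symm_apply, hτ0] at h2
    exact Fin.succ_ne_zero i h2
  have hinj : Function.Injective (fun i : Fin n => (τ.symm i.succ).pred (hτsne i)) := by
    intro i i' hii
    have h2 : τ.symm i.succ = τ.symm i'.succ := by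
      have h3 := congrArg Fin.succ hii
      simpa only [Fin.succ_pred] using h3
    exact Fin.succ_injective _ (τ.symm.injective h2)
  set ρ : Fin n ≃ Fin n := Equiv.ofBijective _ (Finite.injective_iff_bijective.mp hinj)
    with hρ_def
  have hρsucc : ∀ i : Fin n, (ρ i).succ = τ.symm i.succ := by
    intro i
    show ((τ.symm i.succ).pred (hτsne i)).succ = τ.symm i.succ
    exact Fin.succ_pred _ _
  have hcons : ∀ y : Fin n → ℝ,
      (Fin.cons x0 (y ∘ ρ) : Fin (n + 1) → ℝ) = (Fin.cons x0 y : Fin (n + 1) → ℝ) ∘ τ.symm := by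
    intro y
    funext j
    induction j using Fin.cases with
    | zero =>
      show x0 = (Fin.cons x0 y : Fin (n + 1) → ℝ) (τ.symm 0)
      rw [hτs0, Fin.cons_zero]
    | succ i =>
      show (Fin.cons x0 (y ∘ ρ) : Fin (n + 1) → ℝ) i.succ
        = (Fin.cons x0 y : Fin (n + 1) → ℝ) (τ.symm i.succ)
      rw [Fin.cons_succ, ← hρsucc, Fin.cons_succ]
      rfl
  -- measurability
  have hGm0 : Measurable fun y : Fin n → ℝ =>
      ∏ j, gk h (pts n x0 y j - pts n x0 y (σ j)) := by
    apply Finset.measurable_prod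
    intro j _
    exact (gk_continuous h).measurable.comp ((meas_cons_apply x0 j).sub (meas_cons_apply x0 (σ j)))
  have hGm : Measurable fun y : Fin n → ℝ =>
      ENNReal.ofReal (∏ j, gk h (pts n x0 y j - pts n x0 y (σ j))) :=
    hGm0.ennreal_ofReal
  -- pass to lintegral
  rw [integral_eq_lintegral_of_nonneg_ae
    (Filter.Eventually.of_forall fun y => Finset.prod_nonneg fun j _ => gk_nonneg hh _)
    hGm0.aestronglyMeasurable]
  -- change of variables
  have mpE := volume_measurePreserving_piCongrLeft (fun _ : Fin n => ℝ) ρ.symm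
  have hE : ∀ y : Fin n → ℝ,
      (MeasurableEquiv.piCongrLeft (fun _ : Fin n => ℝ) ρ.symm) y = y ∘ ρ := by
    intro y
    funext j
    have h1 := Equiv.piCongrLeft_apply_apply (fun _ : Fin n => ℝ) ρ.symm y (ρ j)
    rw [Equiv.symm_apply_apply] at h1
    rw [MeasurableEquiv.coe_piCongrLeft]
    exact h1
  have step2 : ∀ y : Fin n → ℝ,
      (∏ j, gk h (pts n x0 (y ∘ ρ) j - pts n x0 (y ∘ ρ) (σ j)))
      = ∏ k : Fin (n + 1),
        gk h ((Fin.cons x0 y : Fin (n + 1) → ℝ) k - (Fin.snoc y x0 : Fin (n + 1) → ℝ) k) := by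
    intro y
    unfold pts
    rw [hcons y, ← Equiv.prod_comp τ (fun j =>
      gk h (((Fin.cons x0 y : Fin (n + 1) → ℝ) ∘ τ.symm) j
        - ((Fin.cons x0 y : Fin (n + 1) → ℝ) ∘ τ.symm) (σ j)))]
    refine Finset.prod_congr rfl fun k _ => ?_
    simp only [Function.comp_apply]
    rw [Equiv.symm_apply_apply, hστ, Equiv.symm_apply_apply, cons_add_one_eq_snoc]
  have hL : (∫⁻ y : Fin n → ℝ,
        ENNReal.ofReal (∏ j, gk h (pts n x0 y j - pts n x0 y (σ j))))
      = ENNReal.ofReal (gk (h * Real.sqrt ((n : ℝ) + 1)) (x0 - x0)) := by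
    rw [← mpE.lintegral_comp hGm]
    calc ∫⁻ y : Fin n → ℝ, ENNReal.ofReal (∏ j, gk h
          (pts n x0 ((MeasurableEquiv.piCongrLeft (fun _ : Fin n => ℝ) ρ.symm) y) j
          - pts n x0 ((MeasurableEquiv.piCongrLeft (fun _ : Fin n => ℝ) ρ.symm) y) (σ j)))
        = ∫⁻ y : Fin n → ℝ, ENNReal.ofReal (∏ k : Fin (n + 1),
          gk h ((Fin.cons x0 y : Fin (n + 1) → ℝ) k - (Fin.snoc y x0 : Fin (n + 1) → ℝ) k)) := by
          refine lintegral_congr fun y => ?_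
          rw [hE, step2]
      _ = ENNReal.ofReal (gk (h * Real.sqrt ((n : ℝ) + 1)) (x0 - x0)) := chainL h hh n x0 x0
  rw [hL, sub_self, ENNReal.toReal_ofReal (gk_nonneg (by positivity) _)]
  unfold gk
  rw [show (-(0:ℝ) ^ 2 / (2 * (h * Real.sqrt ((n : ℝ) + 1)) ^ 2)) = 0 by norm_num,
    Real.exp_zero, mul_one, show 2 * π * ((n : ℝ) + 1) = (2 * π) * ((n : ℝ) + 1) by ring,
    Real.sqrt_mul (by positivity : (0:ℝ) ≤ 2 * π)]
  ring
end
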